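/- arXiv:2106.10611 — 2 statements merged into one kernel-verified Lean document; each statement's English description precedes it below -/
import Mathlib

section
/- Let β ∈ (-1,1) and let (σ_N^{(i)})_{i∈I} be a family of symmetric permutations of [N]², and set M_N^{(i)} = W_N^{σ_N^{(i)}}. Fix i,i' ∈ I and suppose that: (1) lim_{N→∞} (1/N²) Σ over pairs (j,k) ∈ [N]² with j ≠ k of E[X_N(σ_N^{(i)}(k,j))·X_N(σ_N^{(i')}(j,k))] = K(i,i') (the limit of the injective traffic distribution of the two-vertex test graph with an opposing pair of edges labeled i and i'); and (2) lim_{N→∞} (1/N²) Σ over pairs (j,k) ∈ [N]² with j ≠ k of E[X_N(σ_N^{(i)}(k,j))·X_N(σ_N^{(i')}(k,j))] = J(i,i') (the congruent analogue). Then lim_{N→∞} #FP((σ_N^{(i')})⁻¹ ∘ σ_N^{(i)})/N² = (K(i,i') − β·J(i,i'))/(1 − β²) and lim_{N→∞} #TP((σ_N^{(i')})⁻¹ ∘ σ_N^{(i)})/N² = (−β·K(i,i') + J(i,i'))/(1 − β²). -/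
open MeasureTheory Filter Finset

noncomputable section

namespace PermutedWigner

/-! ### Permutations of `[N]²` -/

/-- A permutation of `[N]²` is symmetric if it commutes with the transpose. -/
def SymmPerm {N : ℕ} (σ : Equiv.Perm (Fin N × Fin N)) : Prop :=
  ∀ p : Fin N × Fin N, σ (p.2, p.1) = ((σ p).2, (σ p).1)

/-- The set of fixed entries of a permutation of `[N]²`. -/
def FPset {N : ℕ} (σ : Equiv.Perm (Fin N × Fin N)) : Finset (Fin N × Fin N) :=
  univ.filter fun p => σ p = p

/-- The set of transposed entries of a permutation of `[N]²`. -/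
def TPset {N : ℕ} (σ : Equiv.Perm (Fin N × Fin N)) : Finset (Fin N × Fin N) :=
  univ.filter fun p => σ p = (p.2, p.1)

/-- The fixed entries in row `j`. -/
def FProw {N : ℕ} (σ : Equiv.Perm (Fin N × Fin N)) (j : Fin N) : Finset (Fin N) :=
  univ.filter fun k => σ (j, k) = (j, k)

/-- The transposed entries in row `j`. -/
def TProw {N : ℕ} (σ : Equiv.Perm (Fin N × Fin N)) (j : Fin N) : Finset (Fin N) :=
  univ.filter fun k => σ (j, k) = (k, j)

/-- The grid of an entry `(j,k)`: entries sharing a coordinate with `{j,k}`, except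
`(j,k)` and `(k,j)` themselves. -/
def GridPt {N : ℕ} (p : Fin N × Fin N) : Finset (Fin N × Fin N) :=
  (univ.filter fun q : Fin N × Fin N =>
      q.1 = p.1 ∨ q.1 = p.2 ∨ q.2 = p.1 ∨ q.2 = p.2) \ {p, (p.2, p.1)}

/-- The entries moved within their grid by `σ`. -/
def GridSet {N : ℕ} (σ : Equiv.Perm (Fin N × Fin N)) : Finset (Fin N × Fin N) :=
  univ.filter fun p => σ p ∈ GridPt p

/-- A sequence of permutations of `[N]²` stays off the grid if `#Grid(σ_N) = o(N²)`. -/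
def StaysOffGrid (σ : (N : ℕ) → Equiv.Perm (Fin N × Fin N)) : Prop :=
  Tendsto (fun N : ℕ => ((GridSet (σ N)).card : ℝ) / (N : ℝ) ^ 2) atTop (nhds 0)

/-- `lim_N max_{j∈[N]} f_N(j)/N = lim_N min_{j∈[N]} f_N(j)/N = a`, formulated as uniform
convergence of the row quantities `f_N(j)/N` to `a`. -/
def RowLimit (f : (N : ℕ) → Fin N → ℝ) (a : ℝ) : Prop :=
  ∀ ε > 0, ∀ᶠ N : ℕ in atTop, ∀ j : Fin N, |f N j / (N : ℝ) - a| < ε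

/-! ### Wigner matrices -/

/-- The data of a Wigner matrix ensemble with pseudovariance `β`: independent entries on and
above the diagonal, conjugate-symmetric entries, centered off-diagonal entries of unit variance
and pseudovariance `β`, real diagonal entries, and uniformly bounded moments of all orders. -/
structure WignerData (Ω : Type) [MeasureSpace Ω] (β : ℂ) where
  X : (N : ℕ) → Fin N × Fin N → Ω → ℂ
  m : ℕ → ℝ
  meas : ∀ N p, Measurable (X N p)
  indep : ∀ N : ℕ, ProbabilityTheory.iIndepFun
    (fun p : { p : Fin N × Fin N // p.1 ≤ p.2 } => X N p.val) volume
  conj_symm : ∀ (N : ℕ) (p : Fin N × Fin N) (ω : Ω),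
    X N (p.2, p.1) ω = (starRingEnd ℂ) (X N p ω)
  centered : ∀ (N : ℕ) (j k : Fin N), j < k → ∫ ω, X N (j, k) ω = 0
  variance : ∀ (N : ℕ) (j k : Fin N), j < k → ∫ ω, ‖X N (j, k) ω‖ ^ 2 = 1
  pseudovariance : ∀ (N : ℕ) (j k : Fin N), j < k → ∫ ω, (X N (j, k) ω) ^ 2 = β
  diag_real : ∀ (N : ℕ) (j : Fin N) (ω : Ω), (X N (j, j) ω).im = 0
  integrable_pow : ∀ (N : ℕ) (p : Fin N × Fin N) (ℓ : ℕ),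
    Integrable fun ω => ‖X N p ω‖ ^ ℓ
  moment_bound : ∀ (ℓ : ℕ) (N : ℕ) (p : Fin N × Fin N), (∫ ω, ‖X N p ω‖ ^ ℓ) ≤ m ℓ

variable {Ω : Type} [MeasureSpace Ω] {β : ℂ}

/-- The Wigner matrix `W_N(j,k) = X_N(j,k)/√N`. -/
def Wmat (D : WignerData Ω β) (N : ℕ) (ω : Ω) : Matrix (Fin N) (Fin N) ℂ :=
  fun j k => D.X N (j, k) ω / (Real.sqrt N : ℂ)

/-- The permuted Wigner matrix `W_N^σ(j,k) = W_N(σ(j,k))`. -/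
def WmatPerm (D : WignerData Ω β) (N : ℕ) (σ : Equiv.Perm (Fin N × Fin N)) (ω : Ω) :
    Matrix (Fin N) (Fin N) ℂ :=
  fun j k => Wmat D N ω (σ (j, k)).1 (σ (j, k)).2

/-! ### Test graphs and traffic distributions -/

/-- A test graph in `I`: a finite connected multidigraph with edges labeled by `I`. -/
structure TestGraph (I : Type) where
  V : Type
  E : Type
  fintypeV : Fintype V
  decEqV : DecidableEq V
  fintypeE : Fintype E
  nonemptyV : Nonempty V
  src : E → V
  tar : E → V
  lab : E → I
  connected : ∀ v w : V, Relation.ReflTransGen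
    (fun a b => ∃ e, (src e = a ∧ tar e = b) ∨ (src e = b ∧ tar e = a)) v w

attribute [instance] TestGraph.fintypeV TestGraph.decEqV TestGraph.fintypeE TestGraph.nonemptyV

variable {I : Type}

/-- The injective traffic distribution
`ν⁰_N[T] = (1/N) Σ_{φ : V ↪ [N]} E[∏_{e∈E} A^{γ(e)}(φ(tar e), φ(src e))]`. -/
def nu0 (T : TestGraph I) {N : ℕ} (A : I → Ω → Matrix (Fin N) (Fin N) ℂ) : ℂ :=
  (N : ℂ)⁻¹ * ∑ φ : T.V ↪ Fin N, ∫ ω, ∏ e : T.E, A (T.lab e) ω (φ (T.tar e)) (φ (T.src e))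

/-- Two edges have the same endpoints (as an unordered pair). -/
def SameEnds (T : TestGraph I) (e e' : T.E) : Prop :=
  (T.src e' = T.src e ∧ T.tar e' = T.tar e) ∨ (T.src e' = T.tar e ∧ T.tar e' = T.src e)

/-- The underlying undirected simple graph of a test graph. -/
def underlying (T : TestGraph I) : SimpleGraph T.V where
  Adj v w := v ≠ w ∧ ∃ e, (T.src e = v ∧ T.tar e = w) ∨ (T.src e = w ∧ T.tar e = v)
  symm := ⟨by
    rintro v w ⟨hvw, e, h | h⟩
    · exact ⟨hvw.symm, e, Or.inr h⟩
    · exact ⟨hvw.symm, e, Or.inl h⟩⟩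
  loopless := ⟨by rintro v ⟨h, -⟩; exact h rfl⟩

open scoped Classical in
/-- A double tree: no loops, the underlying simple graph is a tree, and every pair of
adjacent vertices is joined by exactly two directed edges. -/
def IsDoubleTree (T : TestGraph I) : Prop :=
  (∀ e : T.E, T.src e ≠ T.tar e) ∧
  (∀ e : T.E, (univ.filter fun e' => SameEnds T e e').card = 2) ∧
  (underlying T).IsTree

/-- `t` pairs each edge with its twin. -/
def IsTwinInvolution (T : TestGraph I) (t : T.E → T.E) : Prop :=
  ∀ e, t e ≠ e ∧ t (t e) = e ∧ SameEnds T e (t e)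

/-- `S` selects exactly one edge from each twin pair of the pairing `t`. -/
def IsTwinSection (T : TestGraph I) (t : T.E → T.E) (S : Finset T.E) : Prop :=
  ∀ e, e ∈ S ↔ t e ∉ S

/-! ### Moments and noncrossing pairings -/

/-- `E[tr(A_1 ⋯ A_n)]`, the expected normalized trace of a word of random matrices. -/
def expTrWord {N n : ℕ} (A : Fin n → Ω → Matrix (Fin N) (Fin N) ℂ) : ℂ :=
  (N : ℂ)⁻¹ * ∫ ω, ((List.ofFn fun k => A k ω).prod).trace

open scoped Classical in
/-- `Σ_{π ∈ NC₂(n)} ∏_{{j,k} ∈ π} c(j,k)`: the sum over noncrossing pair partitions of `[n]`,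
encoded as fixed-point-free noncrossing involutions. -/
def ncSum (n : ℕ) (c : Fin n → Fin n → ℂ) : ℂ :=
  ∑ π : Equiv.Perm (Fin n),
    if (∀ j, π j ≠ j) ∧ (∀ j, π (π j) = j) ∧
        ¬∃ a b : Fin n, a < b ∧ b < π a ∧ π a < π b then
      ∏ j ∈ univ.filter fun j => j < π j, c j (π j)
    else 0

/-- The triple set in Popa's sufficient condition:
`{(j,k,l) : σ(j,k) ∈ {σ'(j,l), σ'(l,k)}}`. -/
def PopaSet {N : ℕ} (σ σ' : Equiv.Perm (Fin N × Fin N)) :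
    Finset (Fin N × Fin N × Fin N) :=
  univ.filter fun t =>
    σ (t.1, t.2.1) = σ' (t.1, t.2.2) ∨ σ (t.1, t.2.1) = σ' (t.2.2, t.2.1)

/-- A pair of sequences of random matrices converges in distribution to a semicircular family
of covariance `K`: all limiting mixed normalized-trace moments are given by sums over
noncrossing pair partitions of products of the corresponding covariance entries. -/
def ConvergesToSemicircular (M : (N : ℕ) → Fin 2 → Ω → Matrix (Fin N) (Fin N) ℂ)
    (K : Fin 2 → Fin 2 → ℝ) : Prop :=
  ∀ n : ℕ, 1 ≤ n → ∀ i : Fin n → Fin 2,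
    Tendsto (fun N : ℕ => expTrWord (fun k => M N (i k))) atTop
      (nhds (ncSum n fun j k => ((K (i j) (i k) : ℝ) : ℂ)))

/-- The permutation `ρ_N` fixing entries whose (1-based) max coordinate is odd and transposing
entries whose max coordinate is even. -/
def rho (N : ℕ) : Equiv.Perm (Fin N × Fin N) :=
  Function.Involutive.toPerm
    (fun p => if (max p.1.val p.2.val + 1) % 2 = 1 then p else (p.2, p.1))
    (by
      intro p
      dsimp only
      by_cases h : (max p.1.val p.2.val + 1) % 2 = 1
      · simp [h]
      · have h2 : ¬(max p.2.val p.1.val + 1) % 2 = 1 := by rw [max_comm]; exact h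
        simp [h, h2])

/-- The permutation `ζ_{N,n}` fixing entries with (1-based) `j + k ≡ 0 (mod n)` and transposing
all other entries. -/
def zeta (n N : ℕ) : Equiv.Perm (Fin N × Fin N) :=
  Function.Involutive.toPerm
    (fun p => if (p.1.val + p.2.val + 2) % n = 0 then p else (p.2, p.1))
    (by
      intro p
      dsimp only
      by_cases h : (p.1.val + p.2.val + 2) % n = 0
      · simp [h]
      · have h2 : ¬(p.2.val + p.1.val + 2) % n = 0 := by rw [Nat.add_comm p.2.val]; exact h
        simp [h, h2])

/-- The anti-diagonal transpose `(j,k) ↦ (N+1-k, N+1-j)` (1-based). -/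
def adt (N : ℕ) : Equiv.Perm (Fin N × Fin N) :=
  Function.Involutive.toPerm
    (fun p => (⟨N - 1 - p.2.val, by have := p.2.isLt; omega⟩,
               ⟨N - 1 - p.1.val, by have := p.1.isLt; omega⟩))
    (by
      intro p
      obtain ⟨⟨a, ha⟩, ⟨b, hb⟩⟩ := p
      simp only [Prod.ext_iff, Fin.ext_iff]
      omega)

/-- The defining equations (in 1-based coordinates) of the permutation `η_N` of Remark 3.4. -/
def EtaEquations (η : (N : ℕ) → Equiv.Perm (Fin N × Fin N)) : Prop :=
  ∀ N : ℕ,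
    (∀ (j k : Fin N) (_h1 : j.val + 1 < k.val) (_h2 : Even k.val),
      η N (j, k) = (k, ⟨j.val + 1, by have := k.isLt; omega⟩)) ∧
    (∀ (j k : Fin N) (_h1 : j.val + 1 = k.val) (_h2 : Even k.val),
      η N (j, k) = (k, ⟨0, by have := k.isLt; omega⟩)) ∧
    (∀ (j k : Fin N) (_h1 : 0 < j.val) (_h2 : j.val < k.val) (_h3 : Odd k.val),
      η N (j, k) = (k, ⟨j.val - 1, by have := k.isLt; omega⟩)) ∧
    (∀ (j k : Fin N) (_h1 : j.val = 0) (_h2 : j.val < k.val) (_h3 : Odd k.val),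
      η N (j, k) = (k, ⟨k.val - 1, by have := k.isLt; omega⟩)) ∧
    (∀ (j : Fin N) (_h : j.val + 1 < N),
      η N (j, j) = (⟨j.val + 1, by omega⟩, ⟨j.val + 1, by omega⟩)) ∧
    (∀ (j : Fin N) (_h : j.val + 1 = N),
      η N (j, j) = (⟨0, by have := j.isLt; omega⟩, ⟨0, by have := j.isLt; omega⟩)) ∧
    (∀ p : Fin N × Fin N, η N (p.2, p.1) = ((η N p).2, (η N p).1))

/-!
For an off-diagonal entry `p`, the variables `X(σ(pᵀ))` and `X(σ'(p))` are independent, hence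
uncorrelated, unless `σ'(p)` is `σ(pᵀ)` or its transpose, that is, unless `p` is transposed or
fixed by `τ = σ'⁻¹σ`; their covariance is then `β` or `1`. Summing over the off-diagonal entries,
the two normalized sums equal `f + β t` and `β f + t` with `f`, `t` the proportions of fixed and
transposed entries of `τ`, up to the `O(N)` diagonal entries. Since `1 - β² ≠ 0` this linear
system can be inverted in the limit.
-/

open ProbabilityTheory

namespace WignerData

variable {N : ℕ}

lemma X_eq_conj_swap (D : WignerData Ω β) (p : Fin N × Fin N) (ω : Ω) :
    D.X N p ω = starRingEnd ℂ (D.X N p.swap ω) :=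
  D.conj_symm N p.swap ω

lemma exists_X_eq_comp_upper (D : WignerData Ω β) (r : Fin N × Fin N) :
    ∃ q : { q : Fin N × Fin N // q.1 ≤ q.2 }, (q.1 = r ∨ q.1 = r.swap) ∧
      ∃ g : ℂ → ℂ, Measurable g ∧ D.X N r = g ∘ D.X N q.1 := by
  by_cases h : r.1 ≤ r.2
  · exact ⟨⟨r, h⟩, Or.inl rfl, id, measurable_id, rfl⟩
  · exact ⟨⟨r.swap, (not_le.mp h).le⟩, Or.inr rfl, starRingEnd ℂ,
      Complex.continuous_conj.measurable, funext (D.X_eq_conj_swap r)⟩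

lemma indepFun_X (D : WignerData Ω β) {r s : Fin N × Fin N} (hsr : s ≠ r)
    (hsr' : s ≠ r.swap) : IndepFun (D.X N r) (D.X N s) volume := by
  obtain ⟨q, hq, g, hg, hr⟩ := D.exists_X_eq_comp_upper r
  obtain ⟨q', hq', g', hg', hs⟩ := D.exists_X_eq_comp_upper s
  have hne : q ≠ q' := by
    rintro rfl
    rcases hq with hq | hq <;> rcases hq' with hq' | hq'
    · exact hsr (hq'.symm.trans hq)
    · exact hsr' (Prod.swap_eq_iff_eq_swap.mp (hq'.symm.trans hq))
    · exact hsr' (hq'.symm.trans hq)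
    · exact hsr (Prod.swap_injective (hq'.symm.trans hq))
  rw [hr, hs]
  exact ((D.indep N).indepFun hne).comp hg hg'

lemma integral_X_of_ne (D : WignerData Ω β) {r : Fin N × Fin N} (hr : r.1 ≠ r.2) :
    ∫ ω, D.X N r ω = 0 := by
  rcases lt_or_gt_of_ne hr with h | h
  · exact D.centered N r.1 r.2 h
  · simp only [D.X_eq_conj_swap r]
    rw [integral_conj, show r.swap = (r.2, r.1) from rfl, D.centered N r.2 r.1 h, map_zero]

lemma integral_norm_X_sq_of_ne (D : WignerData Ω β) {r : Fin N × Fin N} (hr : r.1 ≠ r.2) :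
    ∫ ω, ‖D.X N r ω‖ ^ 2 = 1 := by
  rcases lt_or_gt_of_ne hr with h | h
  · exact D.variance N r.1 r.2 h
  · simp only [D.X_eq_conj_swap r, Complex.norm_conj]
    exact D.variance N r.2 r.1 h

lemma integral_X_sq_of_ne {β : ℝ} (D : WignerData Ω β) {r : Fin N × Fin N}
    (hr : r.1 ≠ r.2) : ∫ ω, D.X N r ω ^ 2 = β := by
  rcases lt_or_gt_of_ne hr with h | h
  · exact D.pseudovariance N r.1 r.2 h
  · simp only [D.X_eq_conj_swap r, ← map_pow]
    rw [integral_conj, show r.swap = (r.2, r.1) from rfl, D.pseudovariance N r.2 r.1 h,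
      Complex.conj_ofReal]

lemma integral_X_mul_X {β : ℝ} (D : WignerData Ω β) {r : Fin N × Fin N} (hr : r.1 ≠ r.2)
    (s : Fin N × Fin N) :
    ∫ ω, D.X N r ω * D.X N s ω
      = (if s = r.swap then 1 else 0) + β * (if s = r then 1 else 0) := by
  by_cases hs : s = r.swap
  · have hsr : s ≠ r := fun h => hr (by simpa [h] using congrArg Prod.fst hs)
    subst hs
    rw [if_pos rfl, if_neg hsr, mul_zero, add_zero]
    conv_lhs => enter [2, ω]; rw [D.X_eq_conj_swap r.swap, Prod.swap_swap, Complex.mul_conj,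
      Complex.normSq_eq_norm_sq]
    rw [integral_complex_ofReal, D.integral_norm_X_sq_of_ne hr, Complex.ofReal_one]
  · by_cases hsr : s = r
    · subst hsr
      rw [if_neg hs, if_pos rfl, mul_one, zero_add]
      simp_rw [← sq]
      simpa using D.integral_X_sq_of_ne hr
    · rw [(D.indepFun_X hsr hs).integral_fun_mul_eq_mul_integral
        (D.meas N r).aestronglyMeasurable (D.meas N s).aestronglyMeasurable,
        D.integral_X_of_ne hr]
      simp [hs, hsr]

end WignerData

section Permutations

variable {N : ℕ} {σ σ' τ : Equiv.Perm (Fin N × Fin N)}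

lemma SymmPerm.apply_swap (h : SymmPerm σ) (p : Fin N × Fin N) : σ p.swap = (σ p).swap :=
  h p

lemma SymmPerm.apply_fst_ne_snd (h : SymmPerm σ) {p : Fin N × Fin N} (hp : p.1 ≠ p.2) :
    (σ p).1 ≠ (σ p).2 := by
  intro hσp
  have : σ p.swap = σ p := by
    rw [h.apply_swap]
    exact Prod.ext hσp.symm hσp
  exact hp (congrArg Prod.fst (σ.injective this)).symm

lemma SymmPerm.mul_prodComm (h : SymmPerm σ) :
    SymmPerm (σ * Equiv.prodComm (Fin N) (Fin N)) := fun p => by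
  simp only [Equiv.Perm.mul_apply, Equiv.prodComm_apply, Prod.swap_prod_mk]
  exact h (p.2, p.1)

lemma FPset_prodComm_mul : FPset (Equiv.prodComm (Fin N) (Fin N) * τ) = TPset τ := by
  ext p
  simp only [FPset, TPset, mem_filter, mem_univ, true_and, Equiv.Perm.mul_apply,
    Equiv.prodComm_apply, Prod.swap_eq_iff_eq_swap]
  rfl

lemma TPset_prodComm_mul : TPset (Equiv.prodComm (Fin N) (Fin N) * τ) = FPset τ := by
  ext p
  simp only [FPset, TPset, mem_filter, mem_univ, true_and, Equiv.Perm.mul_apply,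
    Equiv.prodComm_apply, Prod.swap_eq_iff_eq_swap, Prod.swap_prod_mk]

lemma card_sdiff_offDiag_le (s : Finset (Fin N × Fin N)) :
    #(s \ univ.filter fun p => p.1 ≠ p.2) ≤ N := by
  calc #(s \ univ.filter fun p => p.1 ≠ p.2) ≤ #(univ : Finset (Fin N)).diag := by
        refine card_le_card fun p hp => ?_
        simp_all
    _ = N := by simp

end Permutations

section Covariances

variable {β : ℝ} (D : WignerData Ω β) {N : ℕ} {σ σ' : Equiv.Perm (Fin N × Fin N)}

lemma integral_X_perm_swap_mul_X_perm (hσ : SymmPerm σ) (hσ' : SymmPerm σ')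
    {p : Fin N × Fin N} (hp : p.1 ≠ p.2) :
    ∫ ω, D.X N (σ (p.2, p.1)) ω * D.X N (σ' (p.1, p.2)) ω
      = (if p ∈ FPset (σ'⁻¹ * σ) then 1 else 0)
        + β * (if p ∈ TPset (σ'⁻¹ * σ) then 1 else 0) := by
  have hfix : σ' p = (σ p.swap).swap ↔ p ∈ FPset (σ'⁻¹ * σ) := by
    rw [hσ.apply_swap, Prod.swap_swap, eq_comm, FPset, mem_filter, Equiv.Perm.mul_apply,
      Equiv.Perm.inv_eq_iff_eq]
    simp only [mem_univ, true_and]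
  have htrans : σ' p = σ p.swap ↔ p ∈ TPset (σ'⁻¹ * σ) := by
    simp only [TPset, mem_filter, mem_univ, true_and, Equiv.Perm.mul_apply,
      Equiv.Perm.inv_eq_iff_eq]
    rw [show ((p.2, p.1) : Fin N × Fin N) = p.swap from rfl, hσ.apply_swap, hσ'.apply_swap,
      eq_comm, Prod.swap_eq_iff_eq_swap]
  have hoff : (σ p.swap).1 ≠ (σ p.swap).2 := hσ.apply_fst_ne_snd (Ne.symm hp)
  show ∫ ω, D.X N (σ p.swap) ω * D.X N (σ' p) ω = _
  rw [D.integral_X_mul_X hoff]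
  simp only [hfix, htrans]

lemma sum_integral_X_perm_swap_mul_X_perm (hσ : SymmPerm σ) (hσ' : SymmPerm σ') :
    ∑ p ∈ univ.filter fun p : Fin N × Fin N => p.1 ≠ p.2,
        ∫ ω, D.X N (σ (p.2, p.1)) ω * D.X N (σ' (p.1, p.2)) ω
      = #((univ.filter fun p : Fin N × Fin N => p.1 ≠ p.2) ∩ FPset (σ'⁻¹ * σ))
        + β * #((univ.filter fun p : Fin N × Fin N => p.1 ≠ p.2) ∩ TPset (σ'⁻¹ * σ)) := by
  rw [sum_congr rfl fun p hp => integral_X_perm_swap_mul_X_perm D hσ hσ' (mem_filter.mp hp).2,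
    sum_add_distrib, ← mul_sum, sum_boole, sum_boole, filter_mem_eq_inter, filter_mem_eq_inter]

lemma sum_integral_X_perm_swap_mul_X_perm_swap (hσ : SymmPerm σ) (hσ' : SymmPerm σ') :
    ∑ p ∈ univ.filter fun p : Fin N × Fin N => p.1 ≠ p.2,
        ∫ ω, D.X N (σ (p.2, p.1)) ω * D.X N (σ' (p.2, p.1)) ω
      = β * #((univ.filter fun p : Fin N × Fin N => p.1 ≠ p.2) ∩ FPset (σ'⁻¹ * σ))
        + #((univ.filter fun p : Fin N × Fin N => p.1 ≠ p.2) ∩ TPset (σ'⁻¹ * σ)) := by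
  have h := sum_integral_X_perm_swap_mul_X_perm D hσ hσ'.mul_prodComm
  rw [mul_inv_rev, mul_assoc, show (Equiv.prodComm (Fin N) (Fin N) : Equiv.Perm _)⁻¹
    = Equiv.prodComm (Fin N) (Fin N) from rfl, FPset_prodComm_mul, TPset_prodComm_mul] at h
  simp only [Equiv.Perm.mul_apply, Equiv.prodComm_apply, Prod.swap_prod_mk] at h
  rw [h, add_comm]

end Covariances

lemma tendsto_card_div_sq_of_tendsto_card_inter_offDiag {s : (N : ℕ) → Finset (Fin N × Fin N)}
    {L : ℂ} (h : Tendsto (fun N : ℕ =>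
      (#((univ.filter fun p : Fin N × Fin N => p.1 ≠ p.2) ∩ s N) : ℂ) / (N : ℂ) ^ 2)
      atTop (nhds L)) :
    Tendsto (fun N : ℕ => (#(s N) : ℂ) / (N : ℂ) ^ 2) atTop (nhds L) := by
  have hdiag : Tendsto (fun N : ℕ =>
      (#(s N \ univ.filter fun p : Fin N × Fin N => p.1 ≠ p.2) : ℂ) / (N : ℂ) ^ 2)
      atTop (nhds 0) := by
    refine squeeze_zero_norm (fun N => ?_) tendsto_inv_atTop_nhds_zero_nat
    rw [norm_div, norm_pow, Complex.norm_natCast, Complex.norm_natCast]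
    calc _ ≤ (N : ℝ) / (N : ℝ) ^ 2 := by gcongr; exact_mod_cast card_sdiff_offDiag_le _
      _ = (N : ℝ)⁻¹ := by
        rcases eq_or_ne (N : ℝ) 0 with hN | hN
        · simp [hN]
        · field_simp
  refine (add_zero L ▸ h.add hdiag).congr fun N => ?_
  rw [← add_div, ← Nat.cast_add, inter_comm, card_inter_add_card_sdiff]

lemma tendsto_of_tendsto_add_mul_of_tendsto_mul_add {α : Type*} {l : Filter α} {x y : α → ℂ}
    {β K J : ℂ} (hβ : 1 - β ^ 2 ≠ 0) (hK : Tendsto (fun n => x n + β * y n) l (nhds K))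
    (hJ : Tendsto (fun n => β * x n + y n) l (nhds J)) :
    Tendsto x l (nhds ((K - β * J) / (1 - β ^ 2))) ∧
      Tendsto y l (nhds ((-β * K + J) / (1 - β ^ 2))) := by
  constructor
  · refine ((hK.sub (hJ.const_mul β)).div_const _).congr fun n => ?_
    field_simp
    ring
  · rw [show -β * K + J = J - β * K by ring]
    refine ((hJ.sub (hK.const_mul β)).div_const _).congr fun n => ?_
    field_simp
    ring

theorem statement10_general
    {Ω : Type} [MeasureSpace Ω] {I : Type}
    (β : ℝ) (hβ : β ∈ Set.Ioo (-1 : ℝ) 1) (D : WignerData Ω (β : ℂ))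
    (σ : I → (N : ℕ) → Equiv.Perm (Fin N × Fin N))
    (hsymm : ∀ (i : I) (N : ℕ), SymmPerm (σ i N))
    (i i' : I) (K J : ℂ)
    (hK : Tendsto (fun N : ℕ => ((N : ℂ) ^ 2)⁻¹ *
        ∑ p ∈ univ.filter fun p : Fin N × Fin N => p.1 ≠ p.2,
          ∫ ω, D.X N (σ i N (p.2, p.1)) ω * D.X N (σ i' N (p.1, p.2)) ω) atTop (nhds K))
    (hJ : Tendsto (fun N : ℕ => ((N : ℂ) ^ 2)⁻¹ *
        ∑ p ∈ univ.filter fun p : Fin N × Fin N => p.1 ≠ p.2,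
          ∫ ω, D.X N (σ i N (p.2, p.1)) ω * D.X N (σ i' N (p.2, p.1)) ω) atTop (nhds J)) :
    Tendsto (fun N : ℕ => ((FPset ((σ i' N)⁻¹ * σ i N)).card : ℂ) / (N : ℂ) ^ 2) atTop
      (nhds ((K - (β : ℂ) * J) / (1 - (β : ℂ) ^ 2))) ∧
    Tendsto (fun N : ℕ => ((TPset ((σ i' N)⁻¹ * σ i N)).card : ℂ) / (N : ℂ) ^ 2) atTop
      (nhds ((-(β : ℂ) * K + J) / (1 - (β : ℂ) ^ 2))) := by
  have hβ2 : (1 : ℂ) - (β : ℂ) ^ 2 ≠ 0 := by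
    norm_cast
    nlinarith [hβ.1, hβ.2]
  have hsum := fun N => sum_integral_X_perm_swap_mul_X_perm D (hsymm i N) (hsymm i' N)
  have hsum' := fun N => sum_integral_X_perm_swap_mul_X_perm_swap D (hsymm i N) (hsymm i' N)
  obtain ⟨hFP, hTP⟩ := tendsto_of_tendsto_add_mul_of_tendsto_mul_add hβ2
    (x := fun N => #((univ.filter fun p : Fin N × Fin N => p.1 ≠ p.2) ∩
      FPset ((σ i' N)⁻¹ * σ i N)) / (N : ℂ) ^ 2)
    (y := fun N => #((univ.filter fun p : Fin N × Fin N => p.1 ≠ p.2) ∩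
      TPset ((σ i' N)⁻¹ * σ i N)) / (N : ℂ) ^ 2)
    (hK.congr fun N => by rw [hsum N]; ring) (hJ.congr fun N => by rw [hsum' N]; ring)
  exact ⟨tendsto_card_div_sq_of_tendsto_card_inter_offDiag hFP,
    tendsto_card_div_sq_of_tendsto_card_inter_offDiag hTP⟩

theorem statement10
    {Ω : Type} [MeasureSpace Ω] [IsProbabilityMeasure (volume : Measure Ω)] {I : Type}
    (β : ℝ) (hβ : β ∈ Set.Ioo (-1 : ℝ) 1) (D : WignerData Ω (β : ℂ))
    (σ : I → (N : ℕ) → Equiv.Perm (Fin N × Fin N))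
    (hsymm : ∀ (i : I) (N : ℕ), SymmPerm (σ i N))
    (i i' : I) (K J : ℂ)
    (hK : Tendsto (fun N : ℕ => ((N : ℂ) ^ 2)⁻¹ *
        ∑ p ∈ univ.filter fun p : Fin N × Fin N => p.1 ≠ p.2,
          ∫ ω, D.X N (σ i N (p.2, p.1)) ω * D.X N (σ i' N (p.1, p.2)) ω) atTop (nhds K))
    (hJ : Tendsto (fun N : ℕ => ((N : ℂ) ^ 2)⁻¹ *
        ∑ p ∈ univ.filter fun p : Fin N × Fin N => p.1 ≠ p.2,
          ∫ ω, D.X N (σ i N (p.2, p.1)) ω * D.X N (σ i' N (p.2, p.1)) ω) atTop (nhds J)) :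
    Tendsto (fun N : ℕ => ((FPset ((σ i' N)⁻¹ * σ i N)).card : ℂ) / (N : ℂ) ^ 2) atTop
      (nhds ((K - (β : ℂ) * J) / (1 - (β : ℂ) ^ 2))) ∧
    Tendsto (fun N : ℕ => ((TPset ((σ i' N)⁻¹ * σ i N)).card : ℂ) / (N : ℂ) ^ 2) atTop
      (nhds ((-(β : ℂ) * K + J) / (1 - (β : ℂ) ^ 2))) :=
  statement10_general β hβ D σ hsymm i i' K J hK hJ

end PermutedWigner
end
end

section
/- For n ∈ ℕ with n ≥ 1 and each N ∈ ℕ, define the permutation ζ_{N,n} of [N]² by ζ_{N,n}(j,k) = (j,k) if j + k ≡ 0 (mod n) and ζ_{N,n}(j,k) = (k,j) otherwise. Then ζ_{N,n} is a symmetric permutation of [N]² that is an involution, Grid(ζ_{N,n}) = ∅, and the row-homogeneous limits hold: lim_{N→∞} max_{j∈[N]} #FP(ζ_{N,n}, j)/N = lim_{N→∞} min_{j∈[N]} #FP(ζ_{N,n}, j)/N = 1/n and lim_{N→∞} max_{j∈[N]} #TP(ζ_{N,n}, j)/N = lim_{N→∞} min_{j∈[N]} #TP(ζ_{N,n}, j)/N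 = (n−1)/n. -/
/-!
Since `ζ_{N,n}` sends every entry to itself or to its transpose, no entry lands on its grid, and
together with symmetry this makes `ζ_{N,n}` an involution. In row `j` the fixed and the transposed
entries cover the row and overlap only on the diagonal, so `#FP(ζ, j) + #TP(ζ, j) = N + 1`. Off the
diagonal, the fixed entries are the `k < N` with `n ∣ k + j + 2` (0-based), and there are
`(N + j + 1)/n - (j + 1)/n ∈ [N/n, N/n + 1]` of them. Hence both row counts are within a constant
of `N/n` and `(n - 1)N/n` uniformly in `j`.
-/

open MeasureTheory Filter Finset

noncomputable section

namespace PermutedWigner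

variable {Ω : Type} [MeasureSpace Ω] {β : ℂ}

variable {I : Type}

lemma _root_.Nat.count_dvd_add_succ (n b N : ℕ) :
    Nat.count (fun k => n ∣ k + b + 1) N = (N + b) / n - b / n := by
  have h := Nat.count_add' (p := fun k => n ∣ k + 1) N b
  simp only [Nat.count_eq_card_filter_range, Nat.card_multiples] at h
  simp only [Nat.count_eq_card_filter_range]
  omega

lemma _root_.Nat.count_dvd_add_succ_mem_Icc (n b N : ℕ) :
    Nat.count (fun k => n ∣ k + b + 1) N ∈ Set.Icc (N / n) (N / n + 1) := by
  have h₁ := Nat.div_add_div_le_add_div (x := N) (y := b) (z := n)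
  have h₂ := Nat.add_div_le_div_add_div_add_one N b n
  rw [Nat.count_dvd_add_succ, Set.mem_Icc]
  generalize (N + b) / n = s at *
  generalize N / n = q at *
  omega

lemma _root_.Fin.card_filter_val_eq_count (p : ℕ → Prop) [DecidablePred p] (N : ℕ) :
    #{k : Fin N | p k} = Nat.count p N := by
  rw [Nat.count_eq_card_filter_range, ← Nat.Iio_eq_range, ← Fin.map_valEmbedding_univ,
    filter_map, card_map]
  rfl

def FixesOrTransposes {N : ℕ} (σ : Equiv.Perm (Fin N × Fin N)) : Prop :=
  ∀ p, σ p = p ∨ σ p = (p.2, p.1)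

section FixesOrTransposes

variable {N : ℕ} {σ : Equiv.Perm (Fin N × Fin N)}

lemma FixesOrTransposes.gridSet_eq_empty (hσ : FixesOrTransposes σ) : GridSet σ = ∅ := by
  refine eq_empty_of_forall_notMem fun p hp => ?_
  rcases hσ p with h | h <;> simp [GridSet, GridPt, h] at hp

lemma FixesOrTransposes.apply_apply (hσ : FixesOrTransposes σ) (hsymm : SymmPerm σ)
    (p : Fin N × Fin N) : σ (σ p) = p := by
  rcases hσ p with h | h
  · rw [h, h]
  · rw [h, hsymm, h]

lemma FixesOrTransposes.card_FProw_add_card_TProw (hσ : FixesOrTransposes σ) (j : Fin N) :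
    #(FProw σ j) + #(TProw σ j) = N + 1 := by
  have hunion : FProw σ j ∪ TProw σ j = univ := by
    ext k
    simpa [FProw, TProw] using hσ (j, k)
  have hinter : FProw σ j ∩ TProw σ j = {j} := by
    ext k
    simp only [FProw, TProw, mem_inter, mem_filter, mem_univ, true_and, mem_singleton]
    constructor
    · rintro ⟨h₁, h₂⟩
      exact (Prod.ext_iff.mp (h₁.symm.trans h₂)).1.symm
    · intro hk
      rw [hk]
      rcases hσ (j, j) with h | h <;> exact ⟨h, h⟩
  rw [← card_union_add_card_inter, hunion, hinter, card_univ, Fintype.card_fin, card_singleton]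

end FixesOrTransposes

lemma rowLimit_of_abs_sub_le (f : (N : ℕ) → Fin N → ℝ) (a K : ℝ)
    (h : ∀ N (j : Fin N), |f N j - a * N| ≤ K) : RowLimit f a := by
  intro ε hε
  filter_upwards [(tendsto_const_div_atTop_nhds_zero_nat K).eventually_lt_const hε,
    eventually_gt_atTop 0] with N hK hN j
  have hN' : (0 : ℝ) < N := by exact_mod_cast hN
  calc |f N j / N - a| = |f N j - a * N| / N := by
        rw [div_sub' hN'.ne', abs_div, abs_of_pos hN', mul_comm]
    _ ≤ K / N := by gcongr; exact h N j
    _ < ε := hK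

section Zeta

variable (n N : ℕ)

lemma zeta_apply (p : Fin N × Fin N) :
    zeta n N p = if (p.1.val + p.2.val + 2) % n = 0 then p else (p.2, p.1) := rfl

lemma zeta_fixesOrTransposes : FixesOrTransposes (zeta n N) := by
  intro p
  rw [zeta_apply]
  split_ifs <;> simp

lemma zeta_symmPerm : SymmPerm (zeta n N) := by
  intro p
  simp only [zeta_apply, Nat.add_comm p.2.val]
  split_ifs <;> rfl

lemma FProw_zeta (j : Fin N) :
    FProw (zeta n N) j = insert j (univ.filter fun k : Fin N => n ∣ k.val + (j.val + 1) + 1) := by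
  ext k
  have hk : k.val + (j.val + 1) + 1 = j.val + k.val + 2 := by omega
  simp only [FProw, zeta_apply, mem_filter, mem_univ, true_and, mem_insert, hk,
    Nat.dvd_iff_mod_eq_zero]
  split_ifs with h
  · simp [h]
  · simp [h, Prod.ext_iff, eq_comm]

lemma card_FProw_zeta_mem_Icc (j : Fin N) :
    #(FProw (zeta n N) j) ∈ Set.Icc (N / n) (N / n + 2) := by
  obtain ⟨h₁, h₂⟩ := Nat.count_dvd_add_succ_mem_Icc n (j.val + 1) N
  rw [← Fin.card_filter_val_eq_count] at h₁ h₂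
  rw [FProw_zeta]
  exact ⟨h₁.trans (card_le_card (subset_insert _ _)), (card_insert_le _ _).trans (by omega)⟩

lemma abs_card_FProw_zeta_sub_le (j : Fin N) :
    |(#(FProw (zeta n N) j) : ℝ) - 1 / n * N| ≤ 2 := by
  obtain ⟨h₁, h₂⟩ := card_FProw_zeta_mem_Icc n N j
  have h₁' : ((N / n : ℕ) : ℝ) ≤ #(FProw (zeta n N) j) := by exact_mod_cast h₁
  have h₂' : (#(FProw (zeta n N) j) : ℝ) ≤ (N / n : ℕ) + 2 := by exact_mod_cast h₂
  have hfloor : (N : ℝ) / n - 1 ≤ (N / n : ℕ) := by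
    rw [← Nat.floor_div_eq_div (K := ℝ)]
    exact (Nat.sub_one_lt_floor _).le
  have hdiv : ((N / n : ℕ) : ℝ) ≤ N / n := Nat.cast_div_le
  rw [abs_le, one_div_mul_eq_div]
  constructor <;> linarith

lemma abs_card_TProw_zeta_sub_le {n : ℕ} (hn : n ≠ 0) (N : ℕ) (j : Fin N) :
    |(#(TProw (zeta n N) j) : ℝ) - ((n : ℝ) - 1) / n * N| ≤ 3 := by
  have hsum : (#(TProw (zeta n N) j) : ℝ) = N + 1 - #(FProw (zeta n N) j) := by
    rw [eq_sub_iff_add_eq, add_comm]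
    exact_mod_cast (zeta_fixesOrTransposes n N).card_FProw_add_card_TProw j
  have hFP := abs_card_FProw_zeta_sub_le n N j
  have hn' : (n : ℝ) ≠ 0 := Nat.cast_ne_zero.mpr hn
  calc |(#(TProw (zeta n N) j) : ℝ) - ((n : ℝ) - 1) / n * N|
      = |1 - ((#(FProw (zeta n N) j) : ℝ) - 1 / n * N)| := by
        rw [hsum]; congr 1; field_simp; ring
    _ ≤ |(1 : ℝ)| + |(#(FProw (zeta n N) j) : ℝ) - 1 / n * N| := abs_sub _ _
    _ ≤ 3 := by rw [abs_one]; linarith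

end Zeta

theorem statement17 (n : ℕ) (hn : 1 ≤ n) :
    (∀ N : ℕ, SymmPerm (zeta n N)) ∧
    (∀ (N : ℕ) (p : Fin N × Fin N), zeta n N (zeta n N p) = p) ∧
    (∀ N : ℕ, GridSet (zeta n N) = ∅) ∧
    RowLimit (fun N j => ((FProw (zeta n N) j).card : ℝ)) (1 / n) ∧
    RowLimit (fun N j => ((TProw (zeta n N) j).card : ℝ)) (((n : ℝ) - 1) / n) :=
  ⟨zeta_symmPerm n,
    fun N => (zeta_fixesOrTransposes n N).apply_apply (zeta_symmPerm n N),
    fun N => (zeta_fixesOrTransposes n N).gridSet_eq_empty,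
    rowLimit_of_abs_sub_le _ _ 2 (abs_card_FProw_zeta_sub_le n),
    rowLimit_of_abs_sub_le _ _ 3 (abs_card_TProw_zeta_sub_le (by omega))⟩

end PermutedWigner
end
end
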